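/- arXiv:math/9502208 — 2 statements merged into one kernel-verified Lean document; each statement's English description precedes it below -/
import Mathlib

section
/- The Lie algebra g₅ is strictly nonsingular, and its center equals span{W}. -/
noncomputable section

/-- The bracket of the Lie algebra g₅ on ℝ⁵ with basis X₁,Y₁,Y₂,Z,W at coordinates 0,…,4. -/
def br5 (u v : Fin 5 → ℝ) : Fin 5 → ℝ :=
  ![0, 0, 0,
    u 0 * v 1 - u 1 * v 0,
    u 0 * v 3 - u 3 * v 0 + (u 1 * v 2 - u 2 * v 1)]

def Wv : Fin 5 → ℝ := Pi.single 4 1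

lemma central_iff (u : Fin 5 → ℝ) :
    (∀ v, br5 u v = 0) ↔ u 0 = 0 ∧ u 1 = 0 ∧ u 2 = 0 ∧ u 3 = 0 := by
  constructor
  · intro h
    have h0 := congrFun (h ![0, 1, 0, 0, 0]) 3
    have h1 := congrFun (h ![1, 0, 0, 0, 0]) 3
    have h2 := congrFun (h ![0, 1, 0, 0, 0]) 4
    have h3 := congrFun (h ![1, 0, 0, 0, 0]) 4
    simp [br5] at h0 h1 h2 h3
    refine ⟨h0, by linarith, by linarith, by linarith⟩
  · rintro ⟨h0, h1, h2, h3⟩ v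
    funext i
    fin_cases i <;> simp [br5, h0, h1, h2, h3]

/-- g₅ is strictly nonsingular: for every noncentral X and every central Z there is Y
with [X,Y] = Z; moreover the center of g₅ equals span{W}. -/
theorem stmt3 :
    (∀ X : Fin 5 → ℝ, (¬ ∀ v, br5 X v = 0) →
      ∀ Z : Fin 5 → ℝ, (∀ v, br5 Z v = 0) → ∃ Y, br5 X Y = Z) ∧
    {u : Fin 5 → ℝ | ∀ v, br5 u v = 0} =
      (Submodule.span ℝ {Wv} : Submodule ℝ (Fin 5 → ℝ)) := by
  constructor
  · intro X hX Z hZ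
    rw [central_iff] at hZ
    obtain ⟨z0, z1, z2, z3⟩ := hZ
    have hX' : ¬ (X 0 = 0 ∧ X 1 = 0 ∧ X 2 = 0 ∧ X 3 = 0) := fun h =>
      hX ((central_iff X).mpr h)
    set c := Z 4 with hc
    by_cases h0 : X 0 = 0
    · by_cases h1 : X 1 = 0
      · by_cases h2 : X 2 = 0
        · have h3 : X 3 ≠ 0 := fun h3 => hX' ⟨h0, h1, h2, h3⟩
          refine ⟨![-c / X 3, 0, 0, 0, 0], ?_⟩
          funext i
          fin_cases i <;> simp [br5, h0, h1, h2, z0, z1, z2, z3] <;> field_simp <;> exact hc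
        · refine ⟨![0, -c / X 2, 0, 0, 0], ?_⟩
          funext i
          fin_cases i <;> simp [br5, h0, h1, z0, z1, z2, z3] <;> field_simp <;> ring
      · refine ⟨![0, 0, c / X 1, 0, 0], ?_⟩
        funext i
        fin_cases i <;> simp [br5, h0, z0, z1, z2, z3] <;> field_simp <;> exact hc
    · refine ⟨![0, 0, 0, c / X 0, 0], ?_⟩
      funext i
      fin_cases i <;> simp [br5, z0, z1, z2, z3] <;> field_simp <;> exact hc
  · ext u
    simp only [Set.mem_setOf_eq, SetLike.mem_coe, Submodule.mem_span_singleton]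
    rw [central_iff]
    constructor
    · rintro ⟨h0, h1, h2, h3⟩
      refine ⟨u 4, ?_⟩
      funext i
      fin_cases i <;> simp [Wv, h0, h1, h2, h3, Pi.single_apply]
    · rintro ⟨a, rfl⟩
      simp [Wv, Pi.single_apply]
end
end

section
/- Suppose Ψ is a Lie algebra automorphism of g₅ for which there exist signs σ, ρ, σ', ρ' ∈ {1, −1}, integers h₀, h₁, h₂, h₃, h₄, and real numbers c, z, w such that Ψ(W) = σ'W, Ψ(Z) = ρ'Z + h₀W, Ψ(Y₂) ∈ ±Y₂ + span{Z, W}, Ψ(Y₁) = ρ(Y₁ + (1/2)Z) + h₁Y₂ + h₂Z + cW, and Ψ(X₁) = σX₁ + (1/2)h₃Y₁ + (1/2)h₄Y₂ + zZ + wW. Then h₃ ≠ 0 or h₄ ≠ 0. -/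
noncomputable section

def X1 : Fin 5 → ℝ := Pi.single 0 1
def Y1 : Fin 5 → ℝ := Pi.single 1 1
def Y2 : Fin 5 → ℝ := Pi.single 2 1
def Zv : Fin 5 → ℝ := Pi.single 3 1
/-
Apply Ψ to the relation [X₁, Y₁] = Z and compare W-coordinates. If h₃ = h₄ = 0, the
W-coordinate of [Ψ X₁, Ψ Y₁] is σ (ρ/2 + h₂), a half-odd integer since σ, ρ = ±1, whereas the
W-coordinate of Ψ Z is the integer h₀.
-/

lemma int_ne_int_add_half (a b : ℤ) : (a : ℝ) ≠ b + 1 / 2 := by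
  intro h
  have hdouble : ((2 * a : ℤ) : ℝ) = ((2 * b + 1 : ℤ) : ℝ) := by push_cast; linarith
  have := Int.cast_injective hdouble
  omega

lemma int_ne_sign_mul_half_sign_add_int {σ ρ : ℝ} (hσ : σ = 1 ∨ σ = -1) (hρ : ρ = 1 ∨ ρ = -1)
    (a b : ℤ) : (a : ℝ) ≠ σ * (ρ / 2 + b) := by
  rcases hσ with rfl | rfl <;> rcases hρ with rfl | rfl
  · convert int_ne_int_add_half a b using 2; ring
  · convert int_ne_int_add_half a (b - 1) using 2; push_cast; ring
  · convert int_ne_int_add_half a (-b - 1) using 2; push_cast; ring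
  · convert int_ne_int_add_half a (-b) using 2; push_cast; ring

lemma br5_apply_four (u v : Fin 5 → ℝ) :
    br5 u v 4 = u 0 * v 3 - u 3 * v 0 + (u 1 * v 2 - u 2 * v 1) := rfl

lemma br5_X1_Y1 : br5 X1 Y1 = Zv := by
  funext i; fin_cases i <;> simp [br5, X1, Y1, Zv]

theorem stmt7_general (Ψ : (Fin 5 → ℝ) → (Fin 5 → ℝ))
    (hbr : ∀ u v, Ψ (br5 u v) = br5 (Ψ u) (Ψ v))
    (σ ρ ρ' : ℝ)
    (hσ : σ = 1 ∨ σ = -1) (hρ : ρ = 1 ∨ ρ = -1)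
    (h₀ h₁ h₂ h₃ h₄ : ℤ) (c z w : ℝ)
    (hZ : Ψ Zv = ρ' • Zv + (h₀ : ℝ) • Wv)
    (hY₁ : Ψ Y1 = ρ • (Y1 + (1/2 : ℝ) • Zv) + (h₁ : ℝ) • Y2 + (h₂ : ℝ) • Zv + c • Wv)
    (hX₁ : Ψ X1 = σ • X1 + ((1/2 : ℝ) * (h₃ : ℝ)) • Y1 + ((1/2 : ℝ) * (h₄ : ℝ)) • Y2
      + z • Zv + w • Wv) :
    h₃ ≠ 0 ∨ h₄ ≠ 0 := by
  by_contra! ⟨rfl, rfl⟩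
  have hbrW : Ψ Zv 4 = br5 (Ψ X1) (Ψ Y1) 4 := by rw [← br5_X1_Y1, hbr]
  rw [hZ, hX₁, hY₁, br5_apply_four] at hbrW
  have hcoordW : (h₀ : ℝ) = σ * (ρ / 2 + h₂) := by
    simpa [X1, Y1, Y2, Zv, Wv, mul_add, div_eq_mul_inv] using hbrW
  exact int_ne_sign_mul_half_sign_add_int hσ hρ h₀ h₂ hcoordW

/-- If Ψ is a Lie algebra automorphism of g₅ with Ψ(W)=σ'W, Ψ(Z)=ρ'Z+h₀W,
Ψ(Y₂) ∈ ±Y₂ + span{Z,W}, Ψ(Y₁)=ρ(Y₁+(1/2)Z)+h₁Y₂+h₂Z+cW, and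
Ψ(X₁)=σX₁+(1/2)h₃Y₁+(1/2)h₄Y₂+zZ+wW, where σ,ρ,σ',ρ' ∈ {1,-1} and
h₀,…,h₄ are integers, then h₃ ≠ 0 or h₄ ≠ 0. -/
theorem stmt7 (Ψ : (Fin 5 → ℝ) → (Fin 5 → ℝ))
    (hlin : IsLinearMap ℝ Ψ) (hbij : Function.Bijective Ψ)
    (hbr : ∀ u v, Ψ (br5 u v) = br5 (Ψ u) (Ψ v))
    (σ ρ σ' ρ' : ℝ)
    (hσ : σ = 1 ∨ σ = -1) (hρ : ρ = 1 ∨ ρ = -1)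
    (hσ' : σ' = 1 ∨ σ' = -1) (hρ' : ρ' = 1 ∨ ρ' = -1)
    (h₀ h₁ h₂ h₃ h₄ : ℤ) (c z w : ℝ)
    (hW : Ψ Wv = σ' • Wv)
    (hZ : Ψ Zv = ρ' • Zv + (h₀ : ℝ) • Wv)
    (hY₂ : ∃ ε : ℝ, (ε = 1 ∨ ε = -1) ∧ Ψ Y2 - ε • Y2 ∈ Submodule.span ℝ {Zv, Wv})
    (hY₁ : Ψ Y1 = ρ • (Y1 + (1/2 : ℝ) • Zv) + (h₁ : ℝ) • Y2 + (h₂ : ℝ) • Zv + c • Wv)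
    (hX₁ : Ψ X1 = σ • X1 + ((1/2 : ℝ) * (h₃ : ℝ)) • Y1 + ((1/2 : ℝ) * (h₄ : ℝ)) • Y2
      + z • Zv + w • Wv) :
    h₃ ≠ 0 ∨ h₄ ≠ 0 :=
  stmt7_general Ψ hbr σ ρ ρ' hσ hρ h₀ h₁ h₂ h₃ h₄ c z w hZ hY₁ hX₁
end
end
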